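/- arXiv:2602.11502 — 3 statements merged into one kernel-verified Lean document; each statement's English description precedes it below -/
import Mathlib

section
/- Let r ≥ 2 be an integer, F a graph with ex(n,F) = t_r(n) + O(1), and c0 = limsup_{n→∞}(ex(n,F) − t_r(n)). There exists ε0 > 0 such that for every ε with 0 < ε < ε0 there is N such that for all n ≥ N the following holds. Let G be an F-saturated graph on n vertices with minimum degree greater than (1 − 1/r − ε)n, and let V_1, …, V_r be a partition of V(G) such that e(G[V_i]) ≤ c0 and (1/r − 3√ε)n < |V_i| < (1/r + 3√ε)n for every i. Set A_i = {v ∈ V_i : v has at least one neighbor in V_i} and B_i = V_i \ A_i. Then |A_i| ≤ 2c0 for every i, e(G_out) ≤ 2(r−1)r·c0², and every vertex of B_i is adjacent to every vertex of V(G) \ V_i. -/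
set_option maxHeartbeats 1000000


open Finset SimpleGraph
open scoped Classical

/-- `F` has a copy in `G`: an injective graph homomorphism. -/
def SimpleGraph.ContainsCopy {α β : Type*} (F : SimpleGraph α) (G : SimpleGraph β) : Prop :=
  ∃ f : F →g G, Function.Injective f

/-- `G` is `F`-free. -/
def SimpleGraph.FreeOfCopy {α β : Type*} (F : SimpleGraph α) (G : SimpleGraph β) : Prop :=
  ¬ F.ContainsCopy G

/-- Number of edges of a graph. -/
noncomputable def edgeCount {V : Type*} (G : SimpleGraph V) : ℕ := G.edgeSet.ncard

/-- Degree of a vertex. -/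
noncomputable def degCount {V : Type*} (G : SimpleGraph V) (v : V) : ℕ := (G.neighborSet v).ncard

/-- Turán number: max number of edges of an F-free graph on n vertices. -/
noncomputable def exNum {α : Type*} (F : SimpleGraph α) (n : ℕ) : ℕ :=
  sSup {m | ∃ G : SimpleGraph (Fin n), F.FreeOfCopy G ∧ edgeCount G = m}

/-- Number of edges of the Turán graph `T_r(n)`. -/
noncomputable def turanNum (r n : ℕ) : ℕ := edgeCount (turanGraph n r)

/-- The hypothesis `ex(n,F) = t_r(n) + O(1)`. -/
def ExIsTuranPlusO1 {α : Type*} (F : SimpleGraph α) (r : ℕ) : Prop :=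
  ∃ C : ℤ, ∀ n : ℕ, |(exNum F n : ℤ) - (turanNum r n : ℤ)| ≤ C

/-- `c0 = limsup (ex(n,F) - t_r(n))`. -/
noncomputable def exC0 {α : Type*} (F : SimpleGraph α) (r : ℕ) : ℤ :=
  Filter.limsup (fun n : ℕ => (exNum F n : ℤ) - (turanNum r n : ℤ)) Filter.atTop

/-- The signless Laplacian matrix `Q(G) = D(G) + A(G)` of a graph. -/
noncomputable def signlessLaplacian {V : Type*} (G : SimpleGraph V) : Matrix V V ℝ :=
  Matrix.of fun u v =>
    (if u = v then (degCount G u : ℝ) else 0) + (if G.Adj u v then 1 else 0)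

/-- The signless Laplacian spectral radius `q(G)`: the largest eigenvalue of `Q(G)`. -/
noncomputable def qRad {V : Type*} [Fintype V] [DecidableEq V] (G : SimpleGraph V) : ℝ :=
  sSup (spectrum ℝ (signlessLaplacian G))

/-- Number of edges of `G` with both endpoints in `s`. -/
noncomputable def edgesInside {V : Type*} (G : SimpleGraph V) (s : Set V) : ℕ :=
  {e ∈ G.edgeSet | ∀ v ∈ e, v ∈ s}.ncard

/-- `e(G_in)` for a partition `P`. -/
noncomputable def edgesIn {V : Type*} (G : SimpleGraph V) {r : ℕ} (P : Fin r → Finset V) : ℕ :=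
  ∑ i, edgesInside G (P i)

/-- `e(G_out)`: missing cross pairs for a partition `P`. -/
noncomputable def missingCross {V : Type*} (G : SimpleGraph V) {r : ℕ} (P : Fin r → Finset V) : ℕ :=
  {e : Sym2 V | ¬ e.IsDiag ∧ e ∉ G.edgeSet ∧ ¬ ∃ i, ∀ v ∈ e, v ∈ P i}.ncard

/-- `P` is a partition of the vertex set into `r` parts. -/
def IsVertexPartition {V : Type*} {r : ℕ} (P : Fin r → Finset V) : Prop :=
  (∀ i j, i ≠ j → Disjoint (P i) (P j)) ∧ ∀ v, ∃ i, v ∈ P i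

/-- `G` is `F`-saturated: `F`-free, but adding any missing edge creates a copy of `F`. -/
def IsSaturated {α V : Type*} (F : SimpleGraph α) (G : SimpleGraph V) : Prop :=
  F.FreeOfCopy G ∧ ∀ u v : V, u ≠ v → ¬ G.Adj u v → F.ContainsCopy (G ⊔ SimpleGraph.edge u v)

lemma degCount_eq {n : ℕ} (G : SimpleGraph (Fin n)) (v : Fin n) :
    degCount G v = G.degree v := by
  rw [degCount, ← card_neighborFinset_eq_degree, neighborFinset_def,
    Set.ncard_eq_toFinset_card']

lemma edgesInside_eq {n : ℕ} (G : SimpleGraph (Fin n)) (s : Finset (Fin n)) :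
    edgesInside G ↑s = (G.edgeFinset.filter fun e => ∀ v ∈ e, v ∈ s).card := by
  rw [edgesInside, ← Set.ncard_coe_finset]
  congr 1
  ext e
  simp [Set.mem_setOf_eq, mem_edgeFinset]

lemma inside_deg_le {n : ℕ} (G : SimpleGraph (Fin n)) (s : Finset (Fin n)) {t : Fin n}
    (ht : t ∈ s) : ((s.filter (fun u => G.Adj t u)).card) ≤ edgesInside G ↑s := by
  rw [edgesInside_eq]
  apply Finset.card_le_card_of_injOn (fun u => s(t, u))
  · intro u hu
    simp only [mem_coe, mem_filter] at hu
    simp only [mem_coe, mem_filter, mem_edgeFinset, mem_edgeSet]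
    refine ⟨hu.2, ?_⟩
    intro v hv
    rw [Sym2.mem_iff] at hv
    rcases hv with rfl | rfl
    · exact ht
    · exact hu.1
  · intro u hu u' hu' h
    simp only [mem_coe, mem_filter] at hu hu'
    beta_reduce at h
    replace h := (Sym2.mk_eq_mk_iff (p := (t, u)) (q := (t, u'))).mp h
    rcases h with h | h
    · exact congrArg Prod.snd h
    · exact (congrArg Prod.snd h).trans (congrArg Prod.fst h)

lemma claim1 {n : ℕ} (G : SimpleGraph (Fin n)) (s : Finset (Fin n)) :
    ((s.filter fun v => ∃ u ∈ s, G.Adj v u).card) ≤ 2 * edgesInside G ↑s := by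
  rw [edgesInside_eq]
  set E := G.edgeFinset.filter fun e => ∀ v ∈ e, v ∈ s with hE
  have hsub : (s.filter fun v => ∃ u ∈ s, G.Adj v u) ⊆
      E.biUnion (fun e => univ.filter (· ∈ e)) := by
    intro v hv
    simp only [mem_filter] at hv
    obtain ⟨hvs, u, hus, hadj⟩ := hv
    refine mem_biUnion.mpr ⟨s(v, u), ?_, ?_⟩
    · simp only [hE, mem_filter, mem_edgeFinset, mem_edgeSet]
      exact ⟨hadj, fun x hx => by rcases Sym2.mem_iff.mp hx with rfl | rfl <;> assumption⟩
    · simp [Sym2.mem_iff]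
  calc (s.filter fun v => ∃ u ∈ s, G.Adj v u).card
      ≤ (E.biUnion (fun e => univ.filter (· ∈ e))).card := Finset.card_le_card hsub
    _ ≤ ∑ e ∈ E, (univ.filter (· ∈ e)).card := Finset.card_biUnion_le
    _ ≤ ∑ _e ∈ E, 2 := by
        apply Finset.sum_le_sum
        intro e _
        induction e using Sym2.ind with
        | _ x y =>
          have : (univ.filter (· ∈ s(x, y))) = {x, y} := by
            ext z; simp [Sym2.mem_iff]
          rw [this]
          exact (Finset.card_insert_le _ _).trans (by simp)
    _ = 2 * E.card := by rw [Finset.sum_const, smul_eq_mul, mul_comm]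

lemma key {α : Type*} (F : SimpleGraph α) {r n : ℕ}
    (G : SimpleGraph (Fin n)) (sat : IsSaturated F G)
    (P : Fin r → Finset (Fin n)) (hP : IsVertexPartition P)
    (c0 : ℤ) (h_in : ∀ i, (edgesInside G ↑(P i) : ℤ) ≤ c0)
    (ε : ℝ) (hε : 0 < ε)
    (hdeg : ∀ v, (1 - 1/(r : ℝ) - ε) * n < (degCount G v : ℝ))
    (hsize : ∀ i, (1/(r : ℝ) - 3 * Real.sqrt ε) * n < ((P i).card : ℝ))
    (hbig : (Nat.card α : ℝ) + (Nat.card α) * ((ε + 3 * Real.sqrt ε) * n + c0)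
        < (1/(r : ℝ) - 3 * Real.sqrt ε) * n) :
    ∀ i, ∀ v ∈ P i, (∀ u ∈ P i, ¬ G.Adj v u) → ∀ w, w ∉ P i → G.Adj v w := by
  intro i v hv hVnadj w hw
  by_contra hnadj
  have hne : v ≠ w := fun h => hw (h ▸ hv)
  obtain ⟨f, hfinj⟩ := sat.2 v w hne hnadj
  have hfin : Finite α := Finite.of_injective f hfinj
  haveI := Fintype.ofFinite α
  obtain ⟨hPdis, hPcov⟩ := hP
  have hc0 : (0 : ℤ) ≤ c0 := le_trans (Int.ofNat_nonneg _) (h_in i)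
  -- find the edge of F mapped to {v, w}
  have hnothom : ¬ ∀ x y, F.Adj x y → G.Adj (f x) (f y) := by
    intro hall
    exact sat.1 ⟨⟨⇑f, fun h => hall _ _ h⟩, hfinj⟩
  push_neg at hnothom
  obtain ⟨x, y, hxy, hnG⟩ := hnothom
  have hsup : (G ⊔ SimpleGraph.edge v w).Adj (f x) (f y) := f.map_adj hxy
  rw [sup_adj] at hsup
  rcases hsup with h | h
  · exact hnG h
  rw [edge_adj] at h
  obtain ⟨a, b, hab, hfa, hfb⟩ : ∃ a b, F.Adj a b ∧ f a = v ∧ f b = w := by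
    rcases h.1 with ⟨h1, h2⟩ | ⟨h1, h2⟩
    · exact ⟨x, y, hxy, h1, h2⟩
    · exact ⟨y, x, hxy.symm, h2, h1⟩
  -- neighbors of a in the copy land outside P i
  have hout : ∀ c, F.Adj a c → f c ∉ P i := by
    intro c hc
    have hadj2 := f.map_adj hc
    rw [hfa, sup_adj] at hadj2
    rcases hadj2 with h2 | h2
    · exact fun hmem => hVnadj _ hmem h2
    · rw [edge_adj] at h2
      rcases h2.1 with ⟨e1, e2⟩ | ⟨e1, e2⟩
      · intro hm; rw [e2] at hm; exact hw hm
      · exact absurd e1 hne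
  -- non-neighbor counting
  have hmiss : ∀ t, t ∉ P i →
      (((P i).filter (fun u => ¬ G.Adj t u)).card : ℝ)
        ≤ (ε + 3 * Real.sqrt ε) * n + c0 := by
    intro t ht
    obtain ⟨j, htj⟩ := hPcov t
    have hij : i ≠ j := fun h => ht (h ▸ htj)
    set D := (P i).filter (fun u => ¬ G.Adj t u) with hD
    set D' := (P j).filter (fun u => ¬ G.Adj t u ∧ u ≠ t) with hD'
    set Nb := G.neighborFinset t with hNb
    have hdisjDD' : Disjoint D D' :=
      (hPdis i j hij).mono (filter_subset _ _) (filter_subset _ _)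
    have hdisj2 : Disjoint (D ∪ D') (insert t Nb) := by
      rw [Finset.disjoint_insert_right, Finset.disjoint_right]
      constructor
      · intro hmem
        rcases mem_union.mp hmem with hm | hm
        · exact ht (mem_of_mem_filter _ hm)
        · exact ((mem_filter.mp hm).2.2) rfl
      · intro u hu hmem
        rw [hNb, mem_neighborFinset] at hu
        rcases mem_union.mp hmem with hm | hm
        · exact (mem_filter.mp hm).2 hu
        · exact (mem_filter.mp hm).2.1 hu
    have hcard1 : D.card + D'.card + (Nb.card + 1) ≤ n := by
      have h1 : (D ∪ D').card + (insert t Nb).card ≤ n := by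
        rw [← Finset.card_union_of_disjoint hdisj2]
        calc ((D ∪ D') ∪ insert t Nb).card ≤ (univ : Finset (Fin n)).card :=
              Finset.card_le_card (subset_univ _)
          _ = n := by simp
      rw [Finset.card_union_of_disjoint hdisjDD'] at h1
      have h2 : (insert t Nb).card = Nb.card + 1 := by
        rw [Finset.card_insert_of_notMem]
        rw [hNb, mem_neighborFinset]
        exact fun h => (G.irrefl h)
      omega
    have hcard2 : (P j).card ≤ D'.card + ((P j).filter (fun u => G.Adj t u)).card + 1 := by
      have hsub : P j ⊆ D' ∪ ((P j).filter (fun u => G.Adj t u)) ∪ {t} := by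
        intro u hu
        by_cases hut : u = t
        · exact mem_union_right _ (by simp [hut])
        by_cases hadj : G.Adj t u
        · exact mem_union_left _ (mem_union_right _ (mem_filter.mpr ⟨hu, hadj⟩))
        · exact mem_union_left _ (mem_union_left _ (mem_filter.mpr ⟨hu, hadj, hut⟩))
      calc (P j).card ≤ (D' ∪ ((P j).filter (fun u => G.Adj t u)) ∪ {t}).card :=
            Finset.card_le_card hsub
        _ ≤ (D' ∪ ((P j).filter (fun u => G.Adj t u))).card + 1 := by
            refine (Finset.card_union_le _ _).trans ?_ ; simp
        _ ≤ D'.card + ((P j).filter (fun u => G.Adj t u)).card + 1 := by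
            have := Finset.card_union_le D' ((P j).filter (fun u => G.Adj t u))
            omega
    have hdin : (((P j).filter (fun u => G.Adj t u)).card : ℤ) ≤ c0 :=
      le_trans (Int.ofNat_le.mpr (inside_deg_le G (P j) htj)) (h_in j)
    have hdegt : (1 - 1/(r : ℝ) - ε) * n < (Nb.card : ℝ) := by
      have := hdeg t
      rwa [degCount_eq, ← card_neighborFinset_eq_degree] at this
    have hszj := hsize j
    have hdinR : (((P j).filter (fun u => G.Adj t u)).card : ℝ) ≤ (c0 : ℝ) := by
      exact_mod_cast hdin
    have hc1R : (D.card : ℝ) + D'.card + Nb.card + 1 ≤ n := by exact_mod_cast hcard1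
    have hc2R : ((P j).card : ℝ) ≤ (D'.card : ℝ) + ((P j).filter (fun u => G.Adj t u)).card + 1 := by
      exact_mod_cast hcard2
    nlinarith [hdegt, hszj, hdinR, hc1R, hc2R]
  -- the good set
  set W := Finset.image f univ with hW
  set NF := univ.filter (fun c => F.Adj a c) with hNF
  set Good := (P i).filter (fun u => u ∉ W ∧ ∀ c, F.Adj a c → G.Adj u (f c)) with hGood
  set Bad := (P i).filter (fun u => ¬(u ∉ W ∧ ∀ c, F.Adj a c → G.Adj u (f c))) with hBad
  have hbadsub : Bad ⊆ ((P i).filter (· ∈ W)) ∪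
      NF.biUnion (fun c => (P i).filter (fun u => ¬ G.Adj (f c) u)) := by
    intro u hu
    rw [hBad, mem_filter] at hu
    obtain ⟨hui, hu2⟩ := hu
    by_cases huW : u ∈ W
    · exact mem_union_left _ (mem_filter.mpr ⟨hui, huW⟩)
    · push_neg at hu2
      obtain ⟨c, hc, hcn⟩ := hu2 huW
      refine mem_union_right _ (mem_biUnion.mpr ⟨c, ?_, mem_filter.mpr ⟨hui, ?_⟩⟩)
      · rw [hNF, mem_filter]; exact ⟨mem_univ _, hc⟩
      · exact fun hadj => hcn hadj.symm
  have hk : (W.card : ℝ) ≤ (Nat.card α : ℝ) := by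
    rw [Nat.card_eq_fintype_card]
    exact_mod_cast (Finset.card_image_le.trans (le_of_eq (card_univ)))
  have hNFk : (NF.card : ℝ) ≤ (Nat.card α : ℝ) := by
    rw [Nat.card_eq_fintype_card]
    exact_mod_cast (Finset.card_le_card (subset_univ _)).trans (le_of_eq card_univ)
  have hBnonneg : (0 : ℝ) ≤ (ε + 3 * Real.sqrt ε) * n + c0 := by
    have : (0:ℝ) ≤ (c0 : ℝ) := by exact_mod_cast hc0
    have h2 : (0:ℝ) ≤ Real.sqrt ε := Real.sqrt_nonneg _
    positivity
  have hbadcard : (Bad.card : ℝ) ≤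
      (Nat.card α : ℝ) + (Nat.card α) * ((ε + 3 * Real.sqrt ε) * n + c0) := by
    have h1 : Bad.card ≤ ((P i).filter (· ∈ W)).card +
        (NF.biUnion (fun c => (P i).filter (fun u => ¬ G.Adj (f c) u))).card :=
      (Finset.card_le_card hbadsub).trans (Finset.card_union_le _ _)
    have h2 : ((P i).filter (· ∈ W)).card ≤ W.card :=
      Finset.card_le_card_of_injOn id (fun u hu => (mem_filter.mp hu).2) (fun _ _ _ _ h => h)
    have h3 : ((NF.biUnion (fun c => (P i).filter (fun u => ¬ G.Adj (f c) u))).card : ℝ) ≤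
        (NF.card : ℝ) * ((ε + 3 * Real.sqrt ε) * n + c0) := by
      calc ((NF.biUnion (fun c => (P i).filter (fun u => ¬ G.Adj (f c) u))).card : ℝ)
          ≤ ∑ c ∈ NF, (((P i).filter (fun u => ¬ G.Adj (f c) u)).card : ℝ) := by
            exact_mod_cast (Nat.cast_le.mpr Finset.card_biUnion_le).trans (le_of_eq (by push_cast; ring))
        _ ≤ ∑ _c ∈ NF, ((ε + 3 * Real.sqrt ε) * n + c0) := by
            apply Finset.sum_le_sum
            intro c hc
            exact hmiss (f c) (hout c ((mem_filter.mp hc).2))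
        _ = (NF.card : ℝ) * ((ε + 3 * Real.sqrt ε) * n + c0) := by
            rw [Finset.sum_const, nsmul_eq_mul]
    have h1R : (Bad.card : ℝ) ≤ (((P i).filter (· ∈ W)).card : ℝ) +
        ((NF.biUnion (fun c => (P i).filter (fun u => ¬ G.Adj (f c) u))).card : ℝ) := by
      exact_mod_cast h1
    have h2R : (((P i).filter (· ∈ W)).card : ℝ) ≤ (W.card : ℝ) := by exact_mod_cast h2
    nlinarith [mul_le_mul_of_nonneg_right hNFk hBnonneg]
  have hsplit : Good.card + Bad.card = (P i).card :=
    Finset.card_filter_add_card_filter_not _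
  have hgoodpos : 0 < Good.card := by
    rcases Nat.eq_zero_or_pos Good.card with hg | hg
    · exfalso
      have hbadeq : Bad.card = (P i).card := by omega
      have hPi := hsize i
      rw [hbadeq] at hbadcard
      linarith
    · exact hg
  obtain ⟨u, hu⟩ := Finset.card_pos.mp hgoodpos
  rw [hGood, mem_filter] at hu
  obtain ⟨hui, huW, hugood⟩ := hu
  have hunev : ∀ z : α, u ≠ f z := by
    intro z h
    exact huW (Finset.mem_image.mpr ⟨z, mem_univ _, h.symm⟩)
  set f' : α → Fin n := fun z => if z = a then u else f z with hf'
  have hhom : ∀ {x y : α}, F.Adj x y → G.Adj (f' x) (f' y) := by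
    intro x y hxyF
    by_cases hx : x = a <;> by_cases hy : y = a
    · exfalso; rw [hx, hy] at hxyF; exact F.irrefl hxyF
    · subst hx
      simp only [hf', if_pos rfl, if_neg hy]
      exact hugood y hxyF
    · subst hy
      simp only [hf', if_pos rfl, if_neg hx]
      exact (hugood x hxyF.symm).symm
    · simp only [hf', if_neg hx, if_neg hy]
      have hadj3 := f.map_adj hxyF
      rw [sup_adj] at hadj3
      rcases hadj3 with h3 | h3
      · exact h3
      · exfalso
        rw [edge_adj] at h3
        rcases h3.1 with ⟨e1, e2⟩ | ⟨e1, e2⟩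
        · exact hx (hfinj (e1.trans hfa.symm))
        · exact hy (hfinj (e2.trans hfa.symm))
  have hinj' : Function.Injective f' := by
    intro z z' hzz
    simp only [hf'] at hzz
    by_cases hz : z = a <;> by_cases hz' : z' = a
    · rw [hz, hz']
    · rw [if_pos hz, if_neg hz'] at hzz
      exact absurd hzz (hunev z')
    · rw [if_neg hz, if_pos hz'] at hzz
      exact absurd hzz.symm (hunev z)
    · rw [if_neg hz, if_neg hz'] at hzz
      exact hfinj hzz
  exact sat.1 ⟨⟨f', fun h => hhom h⟩, hinj'⟩

lemma lt_pairs_card (r : ℕ) :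
    2 * ((univ : Finset (Fin r × Fin r)).filter (fun ij => ij.1 < ij.2)).card + r = r * r := by
  set L := (univ : Finset (Fin r × Fin r)).filter (fun ij => ij.1 < ij.2) with hL
  set Lgt := (univ : Finset (Fin r × Fin r)).filter (fun ij => ij.2 < ij.1) with hLgt
  set Ld := (univ : Finset (Fin r × Fin r)).filter (fun ij => ij.1 = ij.2) with hLd
  have h1 : L.card + (univ.filter (fun ij : Fin r × Fin r => ¬ ij.1 < ij.2)).card
      = r * r := by
    rw [Finset.card_filter_add_card_filter_not]
    simp [Fintype.card_prod]
  have h2 : (univ.filter (fun ij : Fin r × Fin r => ¬ ij.1 < ij.2)) = Lgt ∪ Ld := by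
    ext ij
    simp only [hLgt, hLd, mem_filter, mem_union, mem_univ, true_and, not_lt]
    constructor
    · intro h
      rcases lt_or_eq_of_le h with h' | h'
      · exact Or.inl h'
      · exact Or.inr h'.symm
    · intro h
      rcases h with h | h
      · exact le_of_lt h
      · exact le_of_eq h.symm
  have h3 : (Lgt ∪ Ld).card = Lgt.card + Ld.card := by
    apply Finset.card_union_of_disjoint
    rw [Finset.disjoint_left]
    intro ij h1' h2'
    rw [hLgt, mem_filter] at h1'
    rw [hLd, mem_filter] at h2'
    exact absurd h2'.2 (ne_of_gt h1'.2)
  have h4 : Lgt.card = L.card := by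
    refine Finset.card_bij' (fun p _ => (p.2, p.1)) (fun p _ => (p.2, p.1)) ?_ ?_ ?_ ?_
    · intro p hp
      rw [hLgt, mem_filter] at hp
      rw [hL, mem_filter]
      exact ⟨mem_univ _, hp.2⟩
    · intro p hp
      rw [hL, mem_filter] at hp
      rw [hLgt, mem_filter]
      exact ⟨mem_univ _, hp.2⟩
    · intro p _; rfl
    · intro p _; rfl
  have h5 : Ld.card = r := by
    have heq : Ld.card = (univ : Finset (Fin r)).card := by
      refine Finset.card_bij' (fun ij _ => ij.1) (fun i _ => (i, i)) ?_ ?_ ?_ ?_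
      · intro ij _; exact mem_univ _
      · intro i _; rw [hLd, mem_filter]; exact ⟨mem_univ _, rfl⟩
      · intro ij hij
        rw [hLd, mem_filter] at hij
        exact Prod.ext rfl hij.2
      · intro i _; rfl
    rw [heq, card_univ, Fintype.card_fin]
  rw [h2, h3, h4, h5] at h1
  omega

lemma claim2 {n r : ℕ} (hn : 0 < n) (G : SimpleGraph (Fin n))
    (P : Fin r → Finset (Fin n)) (hP : IsVertexPartition P)
    (c0 : ℤ) (hc0 : 0 ≤ c0)
    (hA : ∀ i, (((P i).filter (fun v => ∃ u ∈ P i, G.Adj v u)).card : ℤ) ≤ 2 * c0)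
    (hkey : ∀ i, ∀ v ∈ P i, (∀ u ∈ P i, ¬ G.Adj v u) → ∀ w, w ∉ P i → G.Adj v w) :
    (missingCross G P : ℤ) ≤ 2 * ((r : ℤ) - 1) * r * c0 ^ 2 := by
  obtain ⟨hPdis, hPcov⟩ := hP
  set part : Fin n → Fin r := fun v => (hPcov v).choose with hpartdef
  have hpart : ∀ v, v ∈ P (part v) := fun v => (hPcov v).choose_spec
  have hpartu : ∀ v i, v ∈ P i → part v = i := by
    intro v i hvi
    by_contra hne
    exact (Finset.disjoint_left.mp (hPdis _ _ hne) (hpart v)) hvi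
  set Afin : Fin r → Finset (Fin n) :=
    fun i => (P i).filter (fun v => ∃ u ∈ P i, G.Adj v u) with hAfin
  set L := (univ : Finset (Fin r × Fin r)).filter (fun ij => ij.1 < ij.2) with hL
  set T' := L.biUnion (fun ij => (Afin ij.1) ×ˢ (Afin ij.2)) with hT'
  set S := {e : Sym2 (Fin n) | ¬ e.IsDiag ∧ e ∉ G.edgeSet ∧ ¬ ∃ i, ∀ v ∈ e, v ∈ P i}
    with hS
  have hmain : ∀ e ∈ S, ∃ p : Fin n × Fin n, s(p.1, p.2) = e ∧ part p.1 < part p.2 := by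
    intro e he
    induction e using Sym2.ind with
    | _ x y =>
      obtain ⟨hd, _, hcross⟩ := he
      have hpxy : part x ≠ part y := by
        intro h
        refine hcross ⟨part x, ?_⟩
        intro v hv
        rcases Sym2.mem_iff.mp hv with rfl | rfl
        · exact hpart v
        · rw [h]; exact hpart v
      rcases lt_or_gt_of_ne hpxy with hlt | hgt
      · exact ⟨(x, y), rfl, hlt⟩
      · exact ⟨(y, x), Sym2.eq_swap, hgt⟩
  set g : Sym2 (Fin n) → Fin n × Fin n := fun e =>
    if h : ∃ p : Fin n × Fin n, s(p.1, p.2) = e ∧ part p.1 < part p.2 then h.choose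
    else (⟨0, hn⟩, ⟨0, hn⟩) with hg
  have hgspec : ∀ e ∈ S, s((g e).1, (g e).2) = e ∧ part (g e).1 < part (g e).2 := by
    intro e he
    have h := hmain e he
    rw [hg]
    simp only [dif_pos h]
    exact h.choose_spec
  have hmaps : ∀ e ∈ S, g e ∈ (↑T' : Set (Fin n × Fin n)) := by
    intro e he
    obtain ⟨hrep, hlt⟩ := hgspec e he
    set x := (g e).1
    set y := (g e).2
    obtain ⟨hd, hnedge, _⟩ := he
    have hnadj : ¬ G.Adj x y := by
      intro h
      exact hnedge (by rw [← hrep]; exact h)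
    have hyx : ¬ G.Adj y x := fun h => hnadj h.symm
    have hxAx : x ∈ Afin (part x) := by
      rw [hAfin, mem_filter]
      refine ⟨hpart x, ?_⟩
      by_contra hno
      push_neg at hno
      have hyout : y ∉ P (part x) := by
        intro hmem
        exact absurd (hpartu y _ hmem) (ne_of_gt hlt)
      exact hnadj (hkey (part x) x (hpart x) (fun u hu ha => hno u hu ha) y hyout)
    have hyAy : y ∈ Afin (part y) := by
      rw [hAfin, mem_filter]
      refine ⟨hpart y, ?_⟩
      by_contra hno
      push_neg at hno
      have hxout : x ∉ P (part y) := by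
        intro hmem
        exact absurd (hpartu x _ hmem) (ne_of_lt hlt)
      exact hyx (hkey (part y) y (hpart y) (fun u hu ha => hno u hu ha) x hxout)
    rw [Finset.mem_coe, hT', mem_biUnion]
    refine ⟨(part x, part y), ?_, ?_⟩
    · rw [hL, mem_filter]; exact ⟨mem_univ _, hlt⟩
    · rw [Finset.mem_product]; exact ⟨hxAx, hyAy⟩
  have hinj : Set.InjOn g S := by
    intro e1 h1 e2 h2 h
    rw [← (hgspec e1 h1).1, ← (hgspec e2 h2).1, h]
  have hle1 : missingCross G P ≤ T'.card := by
    rw [missingCross]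
    calc S.ncard ≤ (↑T' : Set (Fin n × Fin n)).ncard :=
          Set.ncard_le_ncard_of_injOn g hmaps hinj (T'.finite_toSet)
      _ = T'.card := Set.ncard_coe_finset _
  -- cardinality bound on T'
  set c2 := c0.toNat with hc2
  have hc2eq : (c2 : ℤ) = c0 := Int.toNat_of_nonneg hc0
  have hAnat : ∀ i, (Afin i).card ≤ 2 * c2 := by
    intro i
    have h : ((Afin i).card : ℤ) ≤ 2 * c0 := hA i
    omega
  have hT'card : T'.card ≤ L.card * (2 * c2 * (2 * c2)) := by
    calc T'.card ≤ ∑ ij ∈ L, ((Afin ij.1) ×ˢ (Afin ij.2)).card := Finset.card_biUnion_le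
      _ ≤ L.card * (2 * c2 * (2 * c2)) := by
          rw [← smul_eq_mul]
          apply Finset.sum_le_card_nsmul
          intro ij _
          rw [Finset.card_product]
          exact Nat.mul_le_mul (hAnat _) (hAnat _)
  have hLc := lt_pairs_card r
  -- combine in ℤ
  have h2m : 2 * (missingCross G P : ℤ) ≤ (2 * (L.card : ℤ)) * (2 * c2 * (2 * c2)) := by
    have : (missingCross G P : ℤ) ≤ (L.card : ℤ) * (2 * c2 * (2 * c2)) := by
      exact_mod_cast le_trans hle1 hT'card
    linarith
  have hLZ : 2 * (L.card : ℤ) = (r : ℤ) * r - r := by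
    have : (2 * L.card + r : ℤ) = (r : ℤ) * r := by exact_mod_cast hLc
    linarith
  rw [hLZ] at h2m
  rw [← hc2eq]
  nlinarith [h2m, sq_nonneg ((c2 : ℤ))]

lemma arith_main (r K kc : ℕ) (hr : 2 ≤ r) (hK : kc < K) (c0 : ℤ) (hc0 : 0 ≤ c0)
    (ε : ℝ) (hε : 0 < ε) (hεlt : ε < (1 / (24 * r * (K + 2)))^2)
    (n : ℕ) (hn : (2 * r * K * (c0.natAbs + 1) + 1 : ℕ) ≤ n) :
    (kc : ℝ) + kc * ((ε + 3 * Real.sqrt ε) * n + c0) < (1/(r : ℝ) - 3 * Real.sqrt ε) * n := by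
  have hrR : (2 : ℝ) ≤ (r : ℝ) := by exact_mod_cast hr
  have hr0 : (0 : ℝ) < (r : ℝ) := by linarith
  set s := Real.sqrt ε with hs
  have hs0 : 0 ≤ s := Real.sqrt_nonneg _
  have hC : (0 : ℝ) < 24 * r * (K + 2) := by positivity
  have hC1 : (1 : ℝ) ≤ 24 * r * (K + 2) := by nlinarith [Nat.cast_nonneg (α := ℝ) K]
  have hslt : s < 1 / (24 * r * (K + 2)) := by
    have h := Real.sqrt_lt_sqrt hε.le hεlt
    rwa [Real.sqrt_sq (by positivity)] at h
  have hεs : ε ≤ s := by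
    have hsq : s * s = ε := Real.mul_self_sqrt hε.le
    have hs1 : s ≤ 1 := by
      refine hslt.le.trans ?_
      rw [div_le_one hC]; exact hC1
    nlinarith
  have hkK : (kc : ℝ) ≤ (K : ℝ) - 1 := by
    have : (kc : ℝ) + 1 ≤ (K : ℝ) := by exact_mod_cast hK
    linarith
  have hkc0 : (0 : ℝ) ≤ (kc : ℝ) := Nat.cast_nonneg _
  set ρ := (r : ℝ)⁻¹ with hρ
  have hρ0 : 0 < ρ := by positivity
  have hrρ : (r : ℝ) * ρ = 1 := mul_inv_cancel₀ (ne_of_gt hr0)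
  have h1 : 3 * s + kc * (ε + 3 * s) ≤ (4 * (K : ℝ) + 3) * s := by nlinarith
  have h2 : (4 * (K : ℝ) + 3) * s ≤ (4 * (K : ℝ) + 3) * (1 / (24 * r * (K + 2))) := by
    apply mul_le_mul_of_nonneg_left hslt.le (by positivity)
  have h3 : (4 * (K : ℝ) + 3) * (1 / (24 * r * (K + 2))) ≤ ρ / 2 := by
    rw [mul_one_div, div_le_div_iff₀ hC (by norm_num)]
    have hK0 : (0 : ℝ) ≤ (K : ℝ) := Nat.cast_nonneg _
    nlinarith
  have key1 : 3 * s + kc * (ε + 3 * s) ≤ ρ / 2 := le_trans h1 (le_trans h2 h3)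
  have hn0 : (0 : ℝ) ≤ (n : ℝ) := Nat.cast_nonneg _
  have h4 : (1/(r : ℝ) - 3 * s) * n - kc * ((ε + 3 * s) * n) ≥ n * (ρ / 2) := by
    have h := mul_le_mul_of_nonneg_right key1 hn0
    rw [one_div]
    nlinarith
  have hnR : (2 * (r : ℝ) * K * ((c0.natAbs : ℝ) + 1) + 1) ≤ (n : ℝ) := by
    exact_mod_cast hn
  have habs : ((c0.natAbs : ℕ) : ℝ) = (c0 : ℝ) := by
    rw [Nat.cast_natAbs]
    exact_mod_cast congrArg (Int.cast : ℤ → ℝ) (abs_of_nonneg hc0)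
  have hc0R : (0 : ℝ) ≤ (c0 : ℝ) := by exact_mod_cast hc0
  have h5 : (kc : ℝ) + kc * c0 < n * (ρ / 2) := by
    have hρ2 : (0:ℝ) ≤ ρ / 2 := by positivity
    have hmul := mul_le_mul_of_nonneg_right hnR hρ2
    have heq : (2 * (r : ℝ) * (K : ℝ) * ((c0.natAbs : ℝ) + 1) + 1) * (ρ / 2)
        = ((r : ℝ) * ρ) * ((K : ℝ) * ((c0.natAbs : ℝ) + 1)) + ρ / 2 := by ring
    rw [hrρ, one_mul] at heq
    have hstep : ((K : ℝ) * ((c0.natAbs : ℝ) + 1)) + ρ / 2 ≤ n * (ρ / 2) := by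
      linarith [hmul, heq]
    have hKge : ((kc : ℝ) + 1) * ((c0 : ℝ) + 1) ≤ (K : ℝ) * ((c0.natAbs : ℝ) + 1) := by
      rw [habs]
      apply mul_le_mul (by linarith) le_rfl (by linarith) (by linarith)
    nlinarith
  nlinarith [h4, h5]

/-- structure of F-saturated graphs with large minimum degree. -/
theorem stmt_6 {α : Type*} (F : SimpleGraph α) (r : ℕ) (hr : 2 ≤ r)
    (hO : ExIsTuranPlusO1 F r) :
    ∃ ε0 : ℝ, 0 < ε0 ∧ ∀ ε : ℝ, 0 < ε → ε < ε0 → ∃ N : ℕ, ∀ n ≥ N,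
      ∀ G : SimpleGraph (Fin n), IsSaturated F G →
        (∀ v, (1 - 1/(r : ℝ) - ε) * n < (degCount G v : ℝ)) →
        ∀ P : Fin r → Finset (Fin n), IsVertexPartition P →
          (∀ i, (edgesInside G ↑(P i) : ℤ) ≤ exC0 F r) →
          (∀ i, (1/(r : ℝ) - 3 * Real.sqrt ε) * n < ((P i).card : ℝ) ∧
                ((P i).card : ℝ) < (1/(r : ℝ) + 3 * Real.sqrt ε) * n) →
          (∀ i, (((P i).filter (fun v => ∃ u ∈ P i, G.Adj v u)).card : ℤ) ≤
              2 * exC0 F r) ∧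
          (missingCross G P : ℤ) ≤ 2 * ((r : ℤ) - 1) * r * (exC0 F r) ^ 2 ∧
          (∀ i, ∀ v ∈ P i, (∀ u ∈ P i, ¬ G.Adj v u) →
            ∀ w, w ∉ P i → G.Adj v w) := by
  classical
  have hrpos : (0 : ℝ) < (r : ℝ) := by
    have : 0 < r := by omega
    exact_mod_cast this
  set c0 := exC0 F r with hc0def
  set K := Nat.card α + 1 with hKdef
  refine ⟨(1 / (24 * (r : ℝ) * ((K : ℕ) + 2)))^2, by positivity, ?_⟩
  intro ε hε hεlt
  refine ⟨2 * r * K * (c0.natAbs + 1) + 1, ?_⟩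
  intro n hn G satG hdeg P hP h_in hsz
  have hc0 : (0 : ℤ) ≤ c0 :=
    le_trans (Int.ofNat_nonneg _) (h_in ⟨0, by omega⟩)
  have hA : ∀ i, (((P i).filter (fun v => ∃ u ∈ P i, G.Adj v u)).card : ℤ) ≤ 2 * c0 := by
    intro i
    have h1 : ((((P i).filter (fun v => ∃ u ∈ P i, G.Adj v u)).card : ℤ))
        ≤ 2 * (edgesInside G ↑(P i) : ℤ) := by exact_mod_cast claim1 G (P i)
    have h2 := h_in i
    omega
  have hbig : (Nat.card α : ℝ) + (Nat.card α) * ((ε + 3 * Real.sqrt ε) * n + c0)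
      < (1/(r : ℝ) - 3 * Real.sqrt ε) * n :=
    arith_main r K (Nat.card α) hr (by omega) c0 hc0 ε hε hεlt n hn
  have hkey := key F G satG P hP c0 h_in ε hε hdeg (fun i => (hsz i).1) hbig
  exact ⟨hA, claim2 (by omega : 0 < n) G P hP c0 hc0 hA hkey, hkey⟩
end

section
/- Let r ≥ 3 be an integer. For all sufficiently large n, q(T_r(n)) > 2(1 − 1/r)n − (r+1)²/(n − 2). -/
open Finset SimpleGraph
open scoped Classical

section AuxStmt15

open Matrix

lemma aux_rayleigh_one_le {n : ℕ} (hn : 0 < n) {A : Matrix (Fin n) (Fin n) ℝ}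
    (hA : A.IsHermitian) :
    ∑ u, ∑ v, A u v ≤ sSup (spectrum ℝ A) * n := by
  have hne : Nonempty (Fin n) := Fin.pos_iff_nonempty.mp hn
  set c := Finset.univ.sup' Finset.univ_nonempty hA.eigenvalues with hc
  have hcmem : c ∈ spectrum ℝ A := by
    obtain ⟨i, -, hi⟩ := Finset.exists_mem_eq_sup' Finset.univ_nonempty hA.eigenvalues
    rw [hc, hi]; exact hA.eigenvalues_mem_spectrum_real i
  have hbdd : BddAbove (spectrum ℝ A) := (Matrix.finite_real_spectrum (A := A)).bddAbove
  have hcle : c ≤ sSup (spectrum ℝ A) := le_csSup hbdd hcmem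
  set U := (hA.eigenvectorUnitary : Matrix (Fin n) (Fin n) ℝ) with hU
  have hUU : U * Uᴴ = 1 := by
    have := (Matrix.mem_unitaryGroup_iff).mp hA.eigenvectorUnitary.2
    simpa [Matrix.star_eq_conjTranspose] using this
  have hdiag : A = U * diagonal hA.eigenvalues * Uᴴ := by
    have := hA.spectral_theorem
    simpa [RCLike.ofReal_real_eq_id, Matrix.star_eq_conjTranspose] using this
  have key : c • (1 : Matrix (Fin n) (Fin n) ℝ) - A
      = U * diagonal (fun i => c - hA.eigenvalues i) * Uᴴ := by
    have hd : diagonal (fun i => c - hA.eigenvalues i)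
        = c • (1 : Matrix (Fin n) (Fin n) ℝ) - diagonal hA.eigenvalues := by
      rw [Matrix.smul_one_eq_diagonal, ← Matrix.diagonal_sub]
    have hone : U * (c • (1 : Matrix (Fin n) (Fin n) ℝ)) * Uᴴ
        = c • (1 : Matrix (Fin n) (Fin n) ℝ) := by
      rw [Matrix.mul_smul, Matrix.mul_one, Matrix.smul_mul, hUU]
    rw [hd, Matrix.mul_sub, Matrix.sub_mul, hone, ← hdiag]
  have hpsd : (c • (1 : Matrix (Fin n) (Fin n) ℝ) - A).PosSemidef := by
    rw [key]
    exact (Matrix.posSemidef_diagonal_iff.mpr fun i =>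
      sub_nonneg.2 (Finset.le_sup' _ (Finset.mem_univ i))).mul_mul_conjTranspose_same U
  have h0 := hpsd.dotProduct_mulVec_nonneg (fun _ => (1 : ℝ))
  simp only [dotProduct, Matrix.mulVec, dotProduct, star_trivial, one_mul,
    mul_one, Matrix.sub_apply, Matrix.smul_apply, Matrix.one_apply, smul_eq_mul, mul_ite,
    mul_zero, Finset.sum_sub_distrib, Finset.sum_ite_eq, Finset.mem_univ, if_true,
    Finset.sum_const, Finset.card_univ, Fintype.card_fin, nsmul_eq_mul] at h0
  have h1 : ∑ u, ∑ v, A u v ≤ c * n := by nlinarith [h0]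
  calc ∑ u, ∑ v, A u v ≤ c * n := h1
    _ ≤ sSup (spectrum ℝ A) * n := by
        apply mul_le_mul_of_nonneg_right hcle (by positivity)

lemma aux_degCount_eq {V : Type*} [Fintype V] (G : SimpleGraph V) (v : V) :
    degCount G v = (Finset.univ.filter (fun w => G.Adj v w)).card := by
  rw [degCount, Set.ncard_eq_toFinset_card']
  congr 1
  ext w
  simp [SimpleGraph.neighborSet]
  exact Set.mem_toFinset

lemma aux_sl_herm {V : Type*} [Fintype V] [DecidableEq V] (G : SimpleGraph V) :
    (signlessLaplacian G).IsHermitian := by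
  ext u v
  simp only [Matrix.conjTranspose_apply, signlessLaplacian, Matrix.of_apply, star_trivial]
  by_cases h : u = v
  · subst h; simp
  · simp only [h, Ne.symm h, if_false]
    rw [if_congr (G.adj_comm v u) rfl rfl]

lemma aux_sum_Q {V : Type*} [Fintype V] (G : SimpleGraph V) :
    ∑ u, ∑ v, signlessLaplacian G u v = 2 * ∑ u, (degCount G u : ℝ) := by
  have key : ∀ u : V, ∑ v, signlessLaplacian G u v = 2 * (degCount G u : ℝ) := by
    intro u
    simp only [signlessLaplacian, Matrix.of_apply, Finset.sum_add_distrib]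
    rw [Finset.sum_boole, aux_degCount_eq, Finset.sum_ite_eq]
    simp only [Finset.mem_univ, if_true]
    ring
  rw [Finset.sum_congr rfl (fun u _ => key u), ← Finset.mul_sum]

lemma aux_classCard_le (n r : ℕ) (i : ℕ) :
    (Finset.univ.filter (fun w : Fin n => (w : ℕ) % r = i)).card ≤ n / r + 1 := by
  have := Finset.card_le_card_of_injOn (fun w : Fin n => (w : ℕ) / r)
    (s := Finset.univ.filter (fun w : Fin n => (w : ℕ) % r = i))
    (t := Finset.range (n / r + 1))
    (fun w hw => by
      simp only [Finset.mem_coe, Finset.mem_range, Nat.lt_succ_iff]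
      exact Nat.div_le_div_right w.isLt.le)
    (fun w hw w' hw' hww' => by
      simp only [Finset.mem_coe, Finset.mem_filter] at hw hw'
      have hd : (w : ℕ) / r = (w' : ℕ) / r := by simpa using hww'
      have : (w : ℕ) = (w' : ℕ) := by
        have h1 := Nat.div_add_mod (w : ℕ) r
        have h2 := Nat.div_add_mod (w' : ℕ) r
        rw [hd] at h1
        have h3 := hw.2
        have h4 := hw'.2
        omega
      exact Fin.val_injective this)
  simpa using this

lemma aux_le_classCard (n r : ℕ) (hr : 0 < r) (i : ℕ) (hi : i < r) :
    n / r ≤ (Finset.univ.filter (fun w : Fin n => (w : ℕ) % r = i)).card := by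
  have hinj : ∀ a ∈ Finset.range (n / r), i + r * a < n := by
    intro a ha
    rw [Finset.mem_range] at ha
    have h1 : i + r * a < r * (a + 1) := by nlinarith
    have h2 : r * (a + 1) ≤ r * (n / r) := Nat.mul_le_mul_left r ha
    have h3 : r * (n / r) ≤ n := Nat.mul_div_le n r
    omega
  rcases Nat.eq_zero_or_pos n with hn | hn
  · simp [hn, Nat.zero_div]
  have := Finset.card_le_card_of_injOn (fun a : ℕ => (⟨(i + r * a) % n, Nat.mod_lt _ hn⟩ : Fin n))
    (s := Finset.range (n / r))
    (t := Finset.univ.filter (fun w : Fin n => (w : ℕ) % r = i))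
    (fun a ha => by
      have hlt := hinj a ha
      simp only [Finset.mem_coe, Finset.mem_filter, Finset.mem_univ, true_and]
      simp only [Nat.mod_eq_of_lt hlt]
      simp [Nat.add_mul_mod_self_left, Nat.mod_eq_of_lt hi])
    (fun a ha a' ha' haa' => by
      simp only [Finset.mem_coe] at ha ha'
      have h1 := hinj a ha
      have h2 := hinj a' ha'
      simp only [Fin.mk.injEq] at haa'
      rw [Nat.mod_eq_of_lt h1, Nat.mod_eq_of_lt h2] at haa'
      have hra : r * a = r * a' := by omega
      exact Nat.eq_of_mul_eq_mul_left hr hra)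
  simpa using this

lemma aux_sum_cls_eq (n r : ℕ) (hr : 0 < r) :
    ∑ i ∈ Finset.range r,
      (Finset.univ.filter (fun w : Fin n => (w : ℕ) % r = i)).card = n := by
  have := Finset.card_eq_sum_card_fiberwise
    (s := (Finset.univ : Finset (Fin n))) (t := Finset.range r)
    (f := fun v : Fin n => (v : ℕ) % r)
    (fun v _ => Finset.mem_range.mpr (Nat.mod_lt _ hr))
  simpa using this.symm

lemma aux_sum_deg (n r : ℕ) (hr : 0 < r) :
    (n : ℝ) ^ 2 - ((n : ℝ) ^ 2 / r + r) ≤ ∑ v : Fin n, (degCount (turanGraph n r) v : ℝ) := by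
  set cls : ℕ → ℕ := fun i => (Finset.univ.filter (fun w : Fin n => (w : ℕ) % r = i)).card
    with hcls
  have hdegN : ∀ v : Fin n, degCount (turanGraph n r) v + cls ((v : ℕ) % r) = n := by
    intro v
    have h1 : degCount (turanGraph n r) v
        = (Finset.univ.filter (fun w : Fin n => ¬ ((w : ℕ) % r = (v : ℕ) % r))).card := by
      rw [degCount, Set.ncard_eq_toFinset_card']
      congr 1
      ext w
      simp only [Set.mem_toFinset, SimpleGraph.mem_neighborSet, Finset.mem_filter,
        Finset.mem_univ, true_and]
      show (v : ℕ) % r ≠ (w : ℕ) % r ↔ _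
      exact ne_comm
    have hpart := Finset.card_filter_add_card_filter_not
      (s := (Finset.univ : Finset (Fin n))) (p := fun w : Fin n => (w : ℕ) % r = (v : ℕ) % r)
    rw [h1]
    simp only [Finset.card_univ, Fintype.card_fin] at hpart
    simp only [hcls]
    omega
  have hdeg : ∀ v : Fin n, (degCount (turanGraph n r) v : ℝ)
      = (n : ℝ) - (cls ((v : ℕ) % r) : ℝ) := by
    intro v
    rw [eq_sub_iff_add_eq]
    exact_mod_cast hdegN v
  have hfib : ∑ v : Fin n, (cls ((v : ℕ) % r) : ℝ)
      = ∑ i ∈ Finset.range r, (cls i : ℝ) ^ 2 := by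
    rw [← Finset.sum_fiberwise_of_maps_to
      (g := fun v : Fin n => (v : ℕ) % r) (t := Finset.range r)
      (fun v _ => Finset.mem_range.mpr (Nat.mod_lt _ hr))
      (fun v : Fin n => (cls ((v : ℕ) % r) : ℝ))]
    apply Finset.sum_congr rfl
    intro i _
    have hcon : ∀ v ∈ Finset.univ.filter (fun v : Fin n => (v : ℕ) % r = i),
        (cls ((v : ℕ) % r) : ℝ) = (cls i : ℝ) := by
      intro v hv
      rw [Finset.mem_filter] at hv
      rw [hv.2]
    rw [Finset.sum_congr rfl hcon, Finset.sum_const]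
    simp only [hcls]
    push_cast
    ring
  have htot : ∑ i ∈ Finset.range r, (cls i : ℝ) = (n : ℝ) := by
    exact_mod_cast congrArg (Nat.cast : ℕ → ℝ) (aux_sum_cls_eq n r hr)
  -- bound the sum of squares
  set m : ℕ := n / r with hm
  have hbounds : ∀ i ∈ Finset.range r, (m : ℝ) ≤ (cls i : ℝ) ∧ (cls i : ℝ) ≤ (m : ℝ) + 1 := by
    intro i hi
    rw [Finset.mem_range] at hi
    constructor
    · exact_mod_cast aux_le_classCard n r hr i hi
    · exact_mod_cast aux_classCard_le n r i
  have hsq : ∀ i ∈ Finset.range r,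
      (cls i : ℝ) ^ 2 ≤ 1 + 2 * (m : ℝ) * (cls i : ℝ) - (m : ℝ) ^ 2 := by
    intro i hi
    obtain ⟨hl, hu⟩ := hbounds i hi
    nlinarith
  have hsum2 : ∑ i ∈ Finset.range r, (cls i : ℝ) ^ 2
      ≤ (r : ℝ) + 2 * (m : ℝ) * (n : ℝ) - (r : ℝ) * (m : ℝ) ^ 2 := by
    calc ∑ i ∈ Finset.range r, (cls i : ℝ) ^ 2
        ≤ ∑ i ∈ Finset.range r, (1 + 2 * (m : ℝ) * (cls i : ℝ) - (m : ℝ) ^ 2) :=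
          Finset.sum_le_sum hsq
      _ = (r : ℝ) + 2 * (m : ℝ) * (n : ℝ) - (r : ℝ) * (m : ℝ) ^ 2 := by
          rw [Finset.sum_sub_distrib, Finset.sum_add_distrib, Finset.sum_const,
            ← Finset.mul_sum, htot, Finset.sum_const]
          simp only [Finset.card_range, nsmul_eq_mul]
          ring
  have hr0 : (0 : ℝ) < r := by exact_mod_cast hr
  have hkey : (r : ℝ) + 2 * (m : ℝ) * (n : ℝ) - (r : ℝ) * (m : ℝ) ^ 2
      ≤ (n : ℝ) ^ 2 / r + r := by
    rw [← sub_nonneg]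
    have expand : (n : ℝ) ^ 2 / r + r - ((r : ℝ) + 2 * (m : ℝ) * (n : ℝ)
        - (r : ℝ) * (m : ℝ) ^ 2)
        = ((n : ℝ) - (r : ℝ) * (m : ℝ)) ^ 2 / r := by
      field_simp
      ring
    rw [expand]
    positivity
  have hsumdeg : ∑ v : Fin n, (degCount (turanGraph n r) v : ℝ)
      = (n : ℝ) ^ 2 - ∑ i ∈ Finset.range r, (cls i : ℝ) ^ 2 := by
    rw [Finset.sum_congr rfl (fun v _ => hdeg v), Finset.sum_sub_distrib, hfib,
      Finset.sum_const, Finset.card_univ, Fintype.card_fin, nsmul_eq_mul]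
    ring
  rw [hsumdeg]
  have := le_trans hsum2 hkey
  linarith

end AuxStmt15

/-- lower bound for `q(T_r(n))` for large `n`. -/
theorem stmt_15 (r : ℕ) (hr : 3 ≤ r) :
    ∃ N : ℕ, ∀ n ≥ N,
      2 * (1 - 1/(r : ℝ)) * n - ((r : ℝ) + 1) ^ 2 / ((n : ℝ) - 2) <
        qRad (turanGraph n r) := by
  refine ⟨3, fun n hn => ?_⟩
  have hn3 : (3 : ℝ) ≤ n := by exact_mod_cast hn
  have hn0 : 0 < n := by omega
  have hr0 : 0 < r := by omega
  have hrR : (3 : ℝ) ≤ r := by exact_mod_cast hr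
  have hrpos : (0 : ℝ) < r := by linarith
  have hnpos : (0 : ℝ) < n := by linarith
  have hn2 : (0 : ℝ) < (n : ℝ) - 2 := by linarith
  set q := qRad (turanGraph n r) with hq
  have hherm := aux_sl_herm (turanGraph n r)
  have hray := aux_rayleigh_one_le hn0 hherm
  have hQ := aux_sum_Q (turanGraph n r)
  have hdeg := aux_sum_deg n r hr0
  have h1 : 2 * ((n : ℝ) ^ 2 - ((n : ℝ) ^ 2 / r + r)) ≤ q * n := by
    calc 2 * ((n : ℝ) ^ 2 - ((n : ℝ) ^ 2 / r + r))
        ≤ 2 * ∑ u, (degCount (turanGraph n r) u : ℝ) := by linarith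
      _ = ∑ u, ∑ v, signlessLaplacian (turanGraph n r) u v := hQ.symm
      _ ≤ sSup (spectrum ℝ (signlessLaplacian (turanGraph n r))) * n := hray
      _ = q * n := by rw [hq]; rfl
  have h2 : 2 * (n : ℝ) - 2 * n / r - 2 * r / n ≤ q := by
    rw [show 2 * (n : ℝ) - 2 * n / r - 2 * r / n
        = (2 * ((n : ℝ) ^ 2 - ((n : ℝ) ^ 2 / r + r))) / n by field_simp; ring,
      div_le_iff₀ hnpos]
    exact h1
  have h3 : 2 * (1 - 1/(r : ℝ)) * n - ((r : ℝ) + 1) ^ 2 / ((n : ℝ) - 2)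
      < 2 * (n : ℝ) - 2 * n / r - 2 * r / n := by
    have e1 : 2 * (1 - 1/(r : ℝ)) * n = 2 * (n : ℝ) - 2 * n / r := by
      field_simp
    rw [e1]
    have hlt : 2 * (r : ℝ) / n < ((r : ℝ) + 1) ^ 2 / ((n : ℝ) - 2) := by
      rw [div_lt_div_iff₀ hnpos hn2]
      nlinarith [mul_pos (mul_pos hrpos hrpos) hnpos]
    linarith
  linarith
end

section
/- Let r ≥ 3 and c0 ≥ 1 be integers, and let n be an integer with ⌊n/r⌋ > 2c0. Let G be a graph obtained from the Turán graph T_r(n) by adding, inside each of its r parts, at most c0 new edges. Then q(G) ≤ q(T_r(n)) + 4r·c0·(n − ⌊n/r⌋)/(⌊n/r⌋ − 2c0)². -/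
open Finset SimpleGraph
open scoped Classical

open scoped Matrix

section Spectral

open Matrix

variable {V : Type*} [Fintype V] [DecidableEq V] [Nonempty V]

lemma my_sSup_spectrum_mem (A : Matrix V V ℝ) (hA : A.IsHermitian) :
    sSup (spectrum ℝ A) ∈ spectrum ℝ A := by
  have h := Matrix.IsHermitian.spectrum_real_eq_range_eigenvalues hA
  rw [h]
  exact Set.Nonempty.csSup_mem (Set.range_nonempty _) (Set.finite_range _)

lemma my_eig_le_sSup (A : Matrix V V ℝ) (hA : A.IsHermitian) (i : V) :
    hA.eigenvalues i ≤ sSup (spectrum ℝ A) := by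
  have h := Matrix.IsHermitian.spectrum_real_eq_range_eigenvalues hA
  rw [h]
  exact le_csSup ((Set.finite_range _).bddAbove) (Set.mem_range_self i)

lemma my_rayleigh_le (A : Matrix V V ℝ) (hA : A.IsHermitian) (x : V → ℝ) :
    x ⬝ᵥ (A *ᵥ x) ≤ sSup (spectrum ℝ A) * (x ⬝ᵥ x) := by
  set μ := sSup (spectrum ℝ A) with hμ
  set b := hA.eigenvectorBasis with hb
  set y : EuclideanSpace ℝ V := (WithLp.equiv 2 _).symm x with hy
  have key1 : (inner ℝ y (Matrix.toEuclideanLin A y) : ℝ) = x ⬝ᵥ (A *ᵥ x) := by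
    simp [PiLp.inner_apply, Matrix.toEuclideanLin_apply, dotProduct, hy]
    exact Finset.sum_congr rfl fun i _ => mul_comm _ _
  have key2 : ∀ j, (inner ℝ (b j) (Matrix.toEuclideanLin A y) : ℝ) =
      hA.eigenvalues j * inner ℝ (b j) y := by
    intro j
    have hsymm := (Matrix.isHermitian_iff_isSymmetric.1 hA)
    have h1 : Matrix.toEuclideanLin A (b j) = hA.eigenvalues j • (b j) := by
      apply (WithLp.equiv 2 (V → ℝ)).injective
      simpa [Matrix.toEuclideanLin_apply] using hA.mulVec_eigenvectorBasis j
    calc (inner ℝ (b j) (Matrix.toEuclideanLin A y) : ℝ)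
        = inner ℝ (Matrix.toEuclideanLin A (b j)) y := (hsymm _ _).symm
      _ = hA.eigenvalues j * inner ℝ (b j) y := by rw [h1, real_inner_smul_left]
  have expand := b.sum_inner_mul_inner y (Matrix.toEuclideanLin A y)
  have parseval := b.sum_inner_mul_inner y y
  have hxx : (inner ℝ y y : ℝ) = x ⬝ᵥ x := by
    rw [hy, PiLp.inner_apply]; simp [dotProduct, sq]
  calc x ⬝ᵥ (A *ᵥ x) = ∑ j, (inner ℝ y (b j) : ℝ) * inner ℝ (b j) (Matrix.toEuclideanLin A y) := by
        rw [expand, key1]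
    _ = ∑ j, hA.eigenvalues j * ((inner ℝ (b j) y : ℝ) * inner ℝ (b j) y) := by
        refine Finset.sum_congr rfl fun j _ => ?_
        rw [key2 j, real_inner_comm y (b j)]; ring
    _ ≤ ∑ j, μ * ((inner ℝ (b j) y : ℝ) * inner ℝ (b j) y) := by
        refine Finset.sum_le_sum fun j _ => ?_
        exact mul_le_mul_of_nonneg_right (my_eig_le_sSup A hA j) (mul_self_nonneg _)
    _ = μ * (x ⬝ᵥ x) := by
        rw [← Finset.mul_sum]
        congr 1
        rw [← hxx, ← parseval]
        refine Finset.sum_congr rfl fun j _ => ?_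
        rw [real_inner_comm y (b j)]

lemma my_exists_top_eigenvector (A : Matrix V V ℝ) (hA : A.IsHermitian) :
    ∃ x : V → ℝ, x ⬝ᵥ x = 1 ∧ A *ᵥ x = sSup (spectrum ℝ A) • x := by
  have hmem := my_sSup_spectrum_mem A hA
  rw [Matrix.IsHermitian.spectrum_real_eq_range_eigenvalues hA] at hmem
  obtain ⟨j, hj⟩ := hmem
  refine ⟨(WithLp.equiv 2 (V → ℝ)) (hA.eigenvectorBasis j), ?_, ?_⟩
  · have h1 := hA.eigenvectorBasis.orthonormal.1 j
    have h2 : (inner ℝ (hA.eigenvectorBasis j) (hA.eigenvectorBasis j) : ℝ) = 1 := by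
      rw [real_inner_self_eq_norm_sq, h1]; norm_num
    rw [PiLp.inner_apply] at h2; simpa [dotProduct, sq] using h2
  · rw [Matrix.IsHermitian.spectrum_real_eq_range_eigenvalues hA, ← hj]
    exact hA.mulVec_eigenvectorBasis j

end Spectral

section GraphLemmas
open Matrix

variable {V : Type*} [Fintype V] [DecidableEq V]

lemma my_degCount_eq (G : SimpleGraph V) (u : V) : degCount G u = G.degree u := by
  rw [degCount, ← SimpleGraph.card_neighborFinset_eq_degree, SimpleGraph.neighborFinset_def,
    Set.ncard_eq_toFinset_card']

lemma my_signless_isHermitian (G : SimpleGraph V) : (signlessLaplacian G).IsHermitian := by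
  unfold Matrix.IsHermitian
  ext u v
  simp only [Matrix.conjTranspose_apply, signlessLaplacian, Matrix.of_apply, star_trivial]
  rw [SimpleGraph.adj_comm]
  by_cases h : u = v
  · subst h; rfl
  · simp [h, Ne.symm h]

lemma my_signless_mulVec (G : SimpleGraph V) (x : V → ℝ) (u : V) :
    (signlessLaplacian G *ᵥ x) u = (G.degree u : ℝ) * x u + ∑ v ∈ G.neighborFinset u, x v := by
  simp only [Matrix.mulVec, dotProduct, signlessLaplacian, Matrix.of_apply, add_mul,
    Finset.sum_add_distrib, ite_mul, zero_mul, one_mul]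
  congr 1
  · rw [Finset.sum_ite_eq (Finset.univ : Finset V) u (fun v => (degCount G u : ℝ) * x v)]
    simp [my_degCount_eq]
  · rw [SimpleGraph.neighborFinset_eq_filter, Finset.sum_filter]

lemma my_dot_signless (G : SimpleGraph V) (x : V → ℝ) :
    x ⬝ᵥ (signlessLaplacian G *ᵥ x) =
      ∑ u, ((G.degree u : ℝ) * x u ^ 2 + x u * ∑ v ∈ G.neighborFinset u, x v) := by
  rw [dotProduct]
  refine Finset.sum_congr rfl fun u _ => ?_
  rw [my_signless_mulVec]
  ring

lemma my_double_count (G : SimpleGraph V) (f : V → ℝ) :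
    ∑ u, ∑ v ∈ G.neighborFinset u, f v = ∑ v, (G.degree v : ℝ) * f v := by
  have : ∀ u : V, ∑ v ∈ G.neighborFinset u, f v
      = ∑ v, if G.Adj u v then f v else 0 := by
    intro u
    rw [SimpleGraph.neighborFinset_eq_filter, Finset.sum_filter]
  simp_rw [this]
  rw [Finset.sum_comm]
  refine Finset.sum_congr rfl fun v _ => ?_
  rw [← Finset.sum_filter]
  have hfil : Finset.univ.filter (fun u => G.Adj u v) = G.neighborFinset v := by
    ext u; simp [SimpleGraph.mem_neighborFinset, SimpleGraph.adj_comm]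
  rw [hfil, Finset.sum_const, SimpleGraph.card_neighborFinset_eq_degree, nsmul_eq_mul]

end GraphLemmas

section Turan

lemma my_turan_adj (n r : ℕ) (u v : Fin n) :
    (turanGraph n r).Adj u v ↔ (u : ℕ) % r ≠ (v : ℕ) % r := Iff.rfl

lemma my_class_card_bounds (r n : ℕ) (hr : 0 < r) (i : ℕ) (hi : i < r) :
    n / r ≤ #(Finset.univ.filter (fun v : Fin n => (v : ℕ) % r = i)) ∧
    #(Finset.univ.filter (fun v : Fin n => (v : ℕ) % r = i)) ≤ n / r + 1 := by
  have hbij : #(Finset.univ.filter (fun v : Fin n => (v : ℕ) % r = i))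
      = n.count (· ≡ i [MOD r]) := by
    rw [Nat.count_eq_card_filter_range]
    refine Finset.card_bij (fun v _ => (v : ℕ)) ?_ ?_ ?_
    · intro a ha
      simp only [Finset.mem_filter, Finset.mem_univ, true_and] at ha
      simp only [Finset.mem_filter, Finset.mem_range]
      exact ⟨a.2, by rw [Nat.ModEq, ha, Nat.mod_eq_of_lt hi]⟩
    · intro a _ b _ h
      exact Fin.val_injective h
    · intro b hb
      simp only [Finset.mem_filter, Finset.mem_range] at hb
      refine ⟨⟨b, hb.1⟩, ?_, rfl⟩
      simp only [Finset.mem_filter, Finset.mem_univ, true_and]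
      have := hb.2
      rwa [Nat.ModEq, Nat.mod_eq_of_lt hi] at this
  rw [hbij, Nat.count_modEq_card n hr i]
  split_ifs <;> omega

lemma my_turan_degree (r n : ℕ) (u : Fin n) :
    (turanGraph n r).degree u
      + #(Finset.univ.filter (fun v : Fin n => (v : ℕ) % r = (u : ℕ) % r)) = n := by
  rw [← SimpleGraph.card_neighborFinset_eq_degree]
  have hns : (turanGraph n r).neighborFinset u
      = Finset.univ.filter (fun v : Fin n => ¬ ((v : ℕ) % r = (u : ℕ) % r)) := by
    ext v
    simp only [SimpleGraph.mem_neighborFinset, Finset.mem_filter, Finset.mem_univ, true_and,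
      my_turan_adj]
    exact ⟨fun h => fun h2 => h h2.symm, fun h => fun h2 => h h2.symm⟩
  rw [hns, add_comm, Finset.card_filter_add_card_filter_not]
  simp

end Turan

set_option maxHeartbeats 2000000 in
/-- adding at most `c0` edges inside each part of the Turán graph
increases the signless Laplacian spectral radius by at most
`4 r c0 (n - ⌊n/r⌋)/(⌊n/r⌋ - 2c0)²`. -/
theorem stmt_18 (r c0 n : ℕ) (hr : 3 ≤ r) (hc0 : 1 ≤ c0) (hn : 2 * c0 < n / r)
    (H : SimpleGraph (Fin n)) (hle : turanGraph n r ≤ H)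
    (hinside : ∀ i : ℕ, i < r →
      {e ∈ H.edgeSet | e ∉ (turanGraph n r).edgeSet ∧
        ∀ v ∈ e, (v : ℕ) % r = i}.ncard ≤ c0) :
    qRad H ≤ qRad (turanGraph n r) +
      4 * (r : ℝ) * c0 * ((n : ℝ) - ((n / r : ℕ) : ℝ)) /
        (((n / r : ℕ) : ℝ) - 2 * c0) ^ 2 := by
  classical
  obtain ⟨K, hKdef⟩ : ∃ K : SimpleGraph (Fin n), K = H \ turanGraph n r := ⟨_, rfl⟩
  have hKiff : ∀ u v : Fin n, K.Adj u v ↔ H.Adj u v ∧ ¬(turanGraph n r).Adj u v := by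
    intro u v; rw [hKdef]; rfl
  have hrpos : 0 < r := by omega
  have hm3 : 3 ≤ n / r := by omega
  have hn0 : 0 < n := lt_of_lt_of_le (by omega) (Nat.div_le_self n r)
  haveI hne : Nonempty (Fin n) := ⟨⟨0, hn0⟩⟩
  set m := n / r with hmdef
  have hrm : m * r ≤ n := Nat.div_mul_le_self n r
  have h3m : 3 * m ≤ n := by
    calc 3 * m ≤ r * m := Nat.mul_le_mul_right m hr
    _ = m * r := Nat.mul_comm r m
    _ ≤ n := hrm
  -- Turán degrees
  have hTdeg_le : ∀ u : Fin n, (turanGraph n r).degree u + m ≤ n := by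
    intro u
    have h1 := my_turan_degree r n u
    have h2 := (my_class_card_bounds r n hrpos ((u : ℕ) % r) (Nat.mod_lt _ hrpos)).1
    omega
  have hTdeg_ge : ∀ u : Fin n, n ≤ (turanGraph n r).degree u + m + 1 := by
    intro u
    have h1 := my_turan_degree r n u
    have h2 := (my_class_card_bounds r n hrpos ((u : ℕ) % r) (Nat.mod_lt _ hrpos)).2
    omega
  -- K basic facts
  have hKadj : ∀ u v : Fin n, K.Adj u v → (u : ℕ) % r = (v : ℕ) % r := by
    intro u v h
    have h2 := ((hKiff u v).1 h).2
    rw [my_turan_adj] at h2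
    exact not_not.mp h2
  set S : ℕ → Set (Sym2 (Fin n)) := fun i =>
    {e ∈ H.edgeSet | e ∉ (turanGraph n r).edgeSet ∧ ∀ v ∈ e, (v : ℕ) % r = i} with hSdef
  have hedge_mem : ∀ u v : Fin n, K.Adj u v → s(u, v) ∈ S ((u : ℕ) % r) := by
    intro u v h
    refine ⟨((hKiff u v).1 h).1, ?_, ?_⟩
    · rw [SimpleGraph.mem_edgeSet]
      exact ((hKiff u v).1 h).2
    · intro w hw
      rw [Sym2.mem_iff] at hw
      rcases hw with rfl | rfl
      · rfl
      · exact (hKadj u w h).symm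
  have hKdeg : ∀ u : Fin n, K.degree u ≤ c0 := by
    intro u
    have hinj : ∀ v1 ∈ K.neighborFinset u, ∀ v2 ∈ K.neighborFinset u,
        s(u, v1) = s(u, v2) → v1 = v2 := by
      intro v1 _ v2 _ h
      exact (Sym2.congr_right).1 h
    have hmaps : ∀ v ∈ K.neighborFinset u, s(u, v) ∈ (S ((u : ℕ) % r)).toFinset := by
      intro v hv
      rw [SimpleGraph.mem_neighborFinset] at hv
      rw [Set.mem_toFinset]
      exact hedge_mem u v hv
    calc K.degree u = #(K.neighborFinset u) := rfl
      _ ≤ #((S ((u : ℕ) % r)).toFinset) := Finset.card_le_card_of_injOn _ hmaps hinj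
      _ = (S ((u : ℕ) % r)).ncard := (Set.ncard_eq_toFinset_card' _).symm
      _ ≤ c0 := hinside _ (Nat.mod_lt _ hrpos)
  have hKedges : #K.edgeFinset ≤ r * c0 := by
    have hsub : K.edgeFinset ⊆ (Finset.range r).biUnion (fun i => (S i).toFinset) := by
      intro e he
      rw [SimpleGraph.mem_edgeFinset] at he
      induction e with
      | h u v =>
        rw [SimpleGraph.mem_edgeSet] at he
        refine Finset.mem_biUnion.2 ⟨(u : ℕ) % r, Finset.mem_range.2 (Nat.mod_lt _ hrpos), ?_⟩
        rw [Set.mem_toFinset]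
        exact hedge_mem u v he
    calc #K.edgeFinset ≤ #((Finset.range r).biUnion (fun i => (S i).toFinset)) :=
          Finset.card_le_card hsub
      _ ≤ ∑ i ∈ Finset.range r, #((S i).toFinset) := Finset.card_biUnion_le
      _ ≤ ∑ _i ∈ Finset.range r, c0 := by
          refine Finset.sum_le_sum fun i hi => ?_
          rw [← Set.ncard_eq_toFinset_card']
          exact hinside i (Finset.mem_range.1 hi)
      _ = r * c0 := by simp [Finset.sum_const, Nat.mul_comm]
  have hKdegsum : ∑ u, K.degree u ≤ 2 * (r * c0) := by
    rw [SimpleGraph.sum_degrees_eq_twice_card_edges]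
    omega
  have hHdeg : ∀ u : Fin n, H.degree u = (turanGraph n r).degree u + K.degree u := by
    intro u
    have hadj : ∀ v, H.Adj u v ↔ (turanGraph n r).Adj u v ∨ K.Adj u v := by
      intro v
      constructor
      · intro h
        by_cases ht : (turanGraph n r).Adj u v
        · exact Or.inl ht
        · exact Or.inr ((hKiff u v).2 ⟨h, ht⟩)
      · rintro (h | h)
        · exact hle h
        · exact ((hKiff u v).1 h).1
    have hun : H.neighborFinset u = (turanGraph n r).neighborFinset u ∪ K.neighborFinset u := by
      ext v
      simp only [SimpleGraph.mem_neighborFinset, Finset.mem_union]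
      exact hadj v
    have hdisj : Disjoint ((turanGraph n r).neighborFinset u) (K.neighborFinset u) := by
      rw [Finset.disjoint_left]
      intro v hv1 hv2
      rw [SimpleGraph.mem_neighborFinset] at hv1 hv2
      exact ((hKiff u v).1 hv2).2 hv1
    rw [← SimpleGraph.card_neighborFinset_eq_degree, hun,
      Finset.card_union_of_disjoint hdisj]
    rfl
  -- degCount versions
  have hHdegC : ∀ u : Fin n, degCount H u = degCount (turanGraph n r) u + degCount K u := by
    intro u
    rw [my_degCount_eq, my_degCount_eq, my_degCount_eq]
    convert hHdeg u using 2
    congr!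
  have hTdegC_le : ∀ u : Fin n, degCount (turanGraph n r) u + m ≤ n := by
    intro u
    rw [my_degCount_eq]
    convert hTdeg_le u using 2
    congr!
  have hTdegC_ge : ∀ u : Fin n, n ≤ degCount (turanGraph n r) u + m + 1 := by
    intro u
    rw [my_degCount_eq]
    convert hTdeg_ge u using 2
    congr!
  have hKdegC : ∀ u : Fin n, degCount K u ≤ c0 := by
    intro u
    rw [my_degCount_eq]
    exact hKdeg u
  have hKdegsumC : ∑ u : Fin n, degCount K u ≤ 2 * (r * c0) := by
    calc ∑ u : Fin n, degCount K u = ∑ u : Fin n, K.degree u :=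
          Finset.sum_congr rfl fun u _ => my_degCount_eq K u
      _ ≤ 2 * (r * c0) := hKdegsum
  -- matrix split
  have hQsplit : signlessLaplacian H = signlessLaplacian (turanGraph n r) + signlessLaplacian K := by
    ext u v
    simp only [signlessLaplacian, Matrix.add_apply, Matrix.of_apply]
    have hdeg : (degCount H u : ℝ) = (degCount (turanGraph n r) u : ℝ) + (degCount K u : ℝ) := by
      rw [hHdegC u]
      push_cast
      ring
    have hadjsplit : (if H.Adj u v then (1 : ℝ) else 0)
        = (if (turanGraph n r).Adj u v then (1 : ℝ) else 0) + (if K.Adj u v then (1 : ℝ) else 0) := by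
      by_cases ht : (turanGraph n r).Adj u v
      · have hh : H.Adj u v := hle ht
        have hk : ¬K.Adj u v := fun hk => ((hKiff u v).1 hk).2 ht
        simp [ht, hh, hk]
      · by_cases hh : H.Adj u v
        · have hk : K.Adj u v := (hKiff u v).2 ⟨hh, ht⟩
          simp [ht, hh, hk]
        · have hk : ¬K.Adj u v := fun hk => hh ((hKiff u v).1 hk).1
          simp [ht, hh, hk]
    by_cases h : u = v
    · subst h
      simp only [eq_self_iff_true, if_true]
      rw [hadjsplit, hdeg]
      ring
    · simp only [if_neg h]
      rw [hadjsplit]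
      ring
  -- spectral part
  have hermH := my_signless_isHermitian H
  have hermT := my_signless_isHermitian (turanGraph n r)
  obtain ⟨x, hx1, hxe⟩ := my_exists_top_eigenvector (signlessLaplacian H) hermH
  set μ := sSup (spectrum ℝ (signlessLaplacian H)) with hmu
  have hc0R : (1:ℝ) ≤ (c0:ℝ) := by exact_mod_cast hc0
  have hmR : 2*(c0:ℝ) + 1 ≤ (m:ℝ) := by exact_mod_cast hn
  have hnR : 3*(m:ℝ) ≤ (n:ℝ) := by exact_mod_cast h3m
  set g : ℝ := (n:ℝ) - m - c0 - 2 with hgdef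
  have hgpos : 0 < g := by rw [hgdef]; nlinarith
  have hDpos : 0 < (n:ℝ) - m + c0 := by nlinarith
  -- lower bound on μ
  have hmu_lb : 2*((n:ℝ) - m - 1) ≤ μ := by
    have hray := my_rayleigh_le _ hermH (fun _ : Fin n => (1:ℝ))
    have hxx : (fun _ : Fin n => (1:ℝ)) ⬝ᵥ (fun _ => (1:ℝ)) = (n:ℝ) := by
      simp [dotProduct]
    rw [my_dot_signless, hxx] at hray
    have hterm : ∀ u : Fin n, 2*((n:ℝ) - m - 1) ≤
        (H.degree u : ℝ) * (1:ℝ)^2 + (1:ℝ) * ∑ v ∈ H.neighborFinset u, (1:ℝ) := by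
      intro u
      rw [Finset.sum_const, SimpleGraph.card_neighborFinset_eq_degree]
      have hd : ((n:ℝ) - m - 1) ≤ (H.degree u : ℝ) := by
        have h1 := hHdegC u
        have h2 := hTdegC_ge u
        have h3 : n ≤ degCount H u + m + 1 := by omega
        have h4 : ((n:ℕ):ℝ) ≤ ((degCount H u + m + 1 : ℕ):ℝ) := by exact_mod_cast h3
        push_cast at h4
        rw [my_degCount_eq H u] at h4
        linarith
      simp only [one_pow, mul_one, one_mul, nsmul_eq_mul]
      linarith
    have hsum : (n:ℝ) * (2*((n:ℝ)-m-1)) ≤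
        ∑ u : Fin n, ((H.degree u : ℝ) * (1:ℝ)^2 + (1:ℝ) * ∑ v ∈ H.neighborFinset u, (1:ℝ)) := by
      calc (n:ℝ) * (2*((n:ℝ)-m-1)) = ∑ _u : Fin n, 2*((n:ℝ)-m-1) := by
            rw [Finset.sum_const, Finset.card_univ, Fintype.card_fin, nsmul_eq_mul]
        _ ≤ _ := Finset.sum_le_sum fun u _ => hterm u
    have hn0R : (0:ℝ) < n := by exact_mod_cast hn0
    have h6 := le_trans hsum hray
    have h7 : (2*((n:ℝ)-m-1)) * n ≤ μ * n := by linarith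
    exact le_of_mul_le_mul_right h7 hn0R
  -- degree upper bound
  have hdH_ub : ∀ u : Fin n, (H.degree u : ℝ) ≤ (n:ℝ) - m + c0 := by
    intro u
    have h1 := hHdegC u
    have h2 := hTdegC_le u
    have h3 := hKdegC u
    have h4 : degCount H u + m ≤ n + c0 := by omega
    have h5 : ((degCount H u + m : ℕ):ℝ) ≤ ((n + c0 : ℕ):ℝ) := by exact_mod_cast h4
    push_cast at h5
    rw [my_degCount_eq H u] at h5
    linarith
  have hgap : ∀ u : Fin n, g ≤ μ - (H.degree u : ℝ) := by
    intro u
    have := hdH_ub u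
    rw [hgdef]
    linarith [hmu_lb]
  -- coordinate bound on eigenvector
  have hxsq : ∀ u : Fin n, x u ^ 2 ≤ ((n:ℝ) - m + c0) / g^2 := by
    intro u
    have heq : (signlessLaplacian H *ᵥ x) u = μ * x u := by
      rw [hxe]; simp
    rw [my_signless_mulVec] at heq
    have hS : ∑ v ∈ H.neighborFinset u, x v = (μ - (H.degree u : ℝ)) * x u := by
      linarith
    have hsub : ∑ v ∈ H.neighborFinset u, x v ^ 2 ≤ 1 := by
      calc ∑ v ∈ H.neighborFinset u, x v ^ 2 ≤ ∑ v : Fin n, x v ^ 2 :=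
            Finset.sum_le_sum_of_subset_of_nonneg (Finset.subset_univ _)
              (fun i _ _ => sq_nonneg _)
        _ = x ⬝ᵥ x := by simp [dotProduct, sq]
        _ = 1 := hx1
    have hcs : (∑ v ∈ H.neighborFinset u, x v)^2 ≤ (H.degree u : ℝ) := by
      calc (∑ v ∈ H.neighborFinset u, x v)^2
          ≤ (#(H.neighborFinset u) : ℝ) * ∑ v ∈ H.neighborFinset u, x v ^ 2 :=
            sq_sum_le_card_mul_sum_sq
        _ ≤ (H.degree u : ℝ) * 1 := by
            rw [SimpleGraph.card_neighborFinset_eq_degree]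
            exact mul_le_mul_of_nonneg_left hsub (Nat.cast_nonneg _)
        _ = (H.degree u : ℝ) := mul_one _
    have hgu := hgap u
    have hDu := hdH_ub u
    have hkey : g^2 * x u ^2 ≤ (n:ℝ) - m + c0 := by
      have h6 : (μ - (H.degree u : ℝ))^2 * x u ^2 ≤ (n:ℝ) - m + c0 := by
        calc (μ - (H.degree u : ℝ))^2 * x u ^2 = (∑ v ∈ H.neighborFinset u, x v)^2 := by
              rw [hS]; ring
          _ ≤ (H.degree u : ℝ) := hcs
          _ ≤ (n:ℝ) - m + c0 := hDu
      have h7 : g^2 ≤ (μ - (H.degree u : ℝ))^2 :=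
        pow_le_pow_left₀ (le_of_lt hgpos) hgu 2
      have h8 := mul_le_mul_of_nonneg_right h7 (sq_nonneg (x u))
      linarith
    rw [le_div_iff₀ (by positivity : (0:ℝ) < g^2)]
    nlinarith [hkey]
  -- Rayleigh bound for T
  have hqT : x ⬝ᵥ (signlessLaplacian (turanGraph n r) *ᵥ x) ≤ qRad (turanGraph n r) := by
    have h := my_rayleigh_le _ hermT x
    rw [hx1, mul_one] at h
    exact h
  -- bound for the K part
  set B : ℝ := ((n:ℝ) - m + c0) / g^2 with hBdef
  have hBnn : 0 ≤ B := by
    rw [hBdef]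
    exact div_nonneg (le_of_lt hDpos) (sq_nonneg _)
  have hEbound : x ⬝ᵥ (signlessLaplacian K *ᵥ x) ≤ 4*(r:ℝ)*c0*B := by
    rw [my_dot_signless]
    have step1 : ∀ u : Fin n, x u * ∑ v ∈ K.neighborFinset u, x v
        ≤ ∑ v ∈ K.neighborFinset u, (x u^2 + x v^2)/2 := by
      intro u
      rw [Finset.mul_sum]
      exact Finset.sum_le_sum fun v _ => by nlinarith [sq_nonneg (x u - x v)]
    have step2 : ∑ u : Fin n, ∑ v ∈ K.neighborFinset u, (x u^2 + x v^2)/2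
        = ∑ u : Fin n, (K.degree u : ℝ) * x u ^2 := by
      have e1 : ∀ u : Fin n, ∑ v ∈ K.neighborFinset u, (x u^2 + x v^2)/2
          = (K.degree u : ℝ) * (x u^2/2) + ∑ v ∈ K.neighborFinset u, x v^2/2 := by
        intro u
        have e0 : ∀ v : Fin n, (x u^2 + x v^2)/2 = x u^2/2 + x v^2/2 := fun v => by ring
        simp_rw [e0]
        rw [Finset.sum_add_distrib, Finset.sum_const, SimpleGraph.card_neighborFinset_eq_degree,
          nsmul_eq_mul]
      simp_rw [e1]
      rw [Finset.sum_add_distrib, my_double_count K (fun v => x v^2/2), ← Finset.sum_add_distrib]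
      refine Finset.sum_congr rfl fun u _ => ?_
      ring
    calc ∑ u : Fin n, ((K.degree u : ℝ) * x u ^ 2 + x u * ∑ v ∈ K.neighborFinset u, x v)
        ≤ ∑ u : Fin n, ((K.degree u : ℝ) * x u ^ 2 + ∑ v ∈ K.neighborFinset u, (x u^2 + x v^2)/2) :=
          Finset.sum_le_sum fun u _ => by have := step1 u; linarith
      _ = ∑ u : Fin n, (K.degree u : ℝ) * x u ^ 2
            + ∑ u : Fin n, ∑ v ∈ K.neighborFinset u, (x u^2 + x v^2)/2 :=
          Finset.sum_add_distrib
      _ = 2 * ∑ u : Fin n, (K.degree u : ℝ) * x u ^ 2 := by rw [step2]; ring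
      _ ≤ 2 * ∑ u : Fin n, (K.degree u : ℝ) * B := by
          have hterm : ∀ u : Fin n, (K.degree u : ℝ) * x u ^2 ≤ (K.degree u : ℝ) * B := by
            intro u
            refine mul_le_mul_of_nonneg_left ?_ (Nat.cast_nonneg _)
            rw [hBdef]
            exact hxsq u
          have := Finset.sum_le_sum fun u (_ : u ∈ Finset.univ) => hterm u
          linarith
      _ = 2 * B * ∑ u : Fin n, (K.degree u : ℝ) := by rw [← Finset.sum_mul]; ring
      _ ≤ 2 * B * (2*((r:ℝ)*c0)) := by
          have hc : ∑ u : Fin n, (K.degree u : ℝ) ≤ 2*((r:ℝ)*c0) := by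
            have h1 : ((∑ u : Fin n, K.degree u : ℕ) : ℝ) ≤ ((2*(r*c0) : ℕ) : ℝ) := by
              exact_mod_cast hKdegsum
            rw [Nat.cast_sum] at h1
            push_cast at h1
            exact h1
          have h2B : 0 ≤ 2*B := by linarith
          calc 2 * B * ∑ u : Fin n, (K.degree u : ℝ) ≤ 2 * B * (2*((r:ℝ)*c0)) := by
                nlinarith
            _ = 2 * B * (2*((r:ℝ)*c0)) := rfl
      _ = 4*(r:ℝ)*c0*B := by ring
  -- combine
  have hfinal : μ ≤ qRad (turanGraph n r) + 4*(r:ℝ)*c0*B := by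
    have h0 : μ = x ⬝ᵥ (signlessLaplacian H *ᵥ x) := by
      rw [hxe, dotProduct_smul, hx1]
      simp
    rw [h0, hQsplit, Matrix.add_mulVec, dotProduct_add]
    exact add_le_add hqT hEbound
  -- numeric comparison
  have hdenpos : (0:ℝ) < ((m:ℝ) - 2*c0) := by linarith
  have hkey : ((n:ℝ) - m + c0) * ((m:ℝ) - 2*c0)^2 ≤ ((n:ℝ) - m) * g^2 := by
    have hgp : 2*((m:ℝ) - 2*c0) ≤ g := by rw [hgdef]; nlinarith
    have hsq : 4*((m:ℝ) - 2*c0)^2 ≤ g^2 := by nlinarith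
    have haR : 4*((c0:ℝ)) + 2 ≤ (n:ℝ) - m := by nlinarith
    nlinarith [sq_nonneg ((m:ℝ) - 2*c0), mul_le_mul_of_nonneg_left hsq (by nlinarith : (0:ℝ) ≤ (n:ℝ) - m)]
  have hBle : B ≤ ((n:ℝ) - m) / ((m:ℝ) - 2*c0)^2 := by
    rw [hBdef, div_le_div_iff₀ (by positivity) (by positivity)]
    nlinarith [hkey]
  have hstep : 4*(r:ℝ)*c0*B ≤ 4*(r:ℝ)*c0*((n:ℝ) - m) / ((m:ℝ) - 2*c0)^2 := by
    have h4rc : (0:ℝ) ≤ 4*(r:ℝ)*c0 := by positivity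
    calc 4*(r:ℝ)*c0*B ≤ 4*(r:ℝ)*c0*(((n:ℝ) - m) / ((m:ℝ) - 2*c0)^2) :=
          mul_le_mul_of_nonneg_left hBle h4rc
      _ = 4*(r:ℝ)*c0*((n:ℝ) - m) / ((m:ℝ) - 2*c0)^2 := by ring
  have hq : qRad H = μ := rfl
  rw [hq]
  calc μ ≤ qRad (turanGraph n r) + 4*(r:ℝ)*c0*B := hfinal
    _ ≤ qRad (turanGraph n r) + 4*(r:ℝ)*c0*((n:ℝ) - m) / ((m:ℝ) - 2*c0)^2 := by linarith
end
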